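/- Let Φ denote the standard Gaussian cumulative distribution function. Then for every real x ≥ 0, Φ(−x)/Φ(x) ≤ e^{−x}; equivalently, Φ(−x) ≤ e^{−x}·Φ(x). -/

import Mathlib

/-!
Since `Φ x + Φ (-x) = 1`, the claim says `(eˣ + 1) Φ(-x) ≤ 1 = (e⁰ + 1) Φ 0`, so it suffices
that `y ↦ (eʸ + 1) Φ(-y)` is antitone on `[0, ∞)`. Its derivative is `eʸ Φ(-y) - (eʸ + 1) φ(y)`,
which is nonpositive by two Gaussian tail bounds: `Φ(-y) ≤ e^{-y²/2} / 2` (shift the integral by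
`y`), good enough for `y ≤ 1`, and Mills' bound `Φ(-y) ≤ φ(y) / y` for `y ≥ 1`.
-/

/-- The standard Gaussian CDF Φ(x) = (2π)^{−1/2} ∫_{−∞}^x e^{−t²/2} dt. -/
noncomputable def stdGaussCDF (x : ℝ) : ℝ :=
  ∫ t in Set.Iic x, (Real.sqrt (2 * Real.pi))⁻¹ * Real.exp (-t ^ 2 / 2)

open Set MeasureTheory Filter Topology Real ProbabilityTheory

lemma integral_Iic_comp_add_right {E : Type*} [NormedAddCommGroup E] [NormedSpace ℝ E]
    (f : ℝ → E) (a c : ℝ) : ∫ s in Iic c, f (s + a) = ∫ t in Iic (c + a), f t := by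
  have hemb : MeasurableEmbedding (· + a : ℝ → ℝ) :=
    (Homeomorph.addRight a).isClosedEmbedding.measurableEmbedding
  have hpre : Iic c = (· + a) ⁻¹' Iic (c + a) := by ext s; simp
  rw [hpre, ← hemb.setIntegral_map, map_add_right_eq_self]

lemma hasDerivAt_integral_Iic {E : Type*} [NormedAddCommGroup E] [NormedSpace ℝ E]
    [CompleteSpace E] {f : ℝ → E} {x : ℝ} (hf : Integrable f)
    (hmeas : StronglyMeasurableAtFilter f (𝓝 x)) (hcont : ContinuousAt f x) :
    HasDerivAt (fun u ↦ ∫ t in Iic u, f t) (f x) x := by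
  have hsplit : (fun u ↦ ∫ t in Iic u, f t) = fun u ↦ (∫ t in Iic 0, f t) + ∫ t in 0..u, f t := by
    ext u
    rw [← intervalIntegral.integral_Iic_sub_Iic hf.integrableOn hf.integrableOn]
    abel
  rw [hsplit]
  exact (intervalIntegral.integral_hasDerivAt_right hf.intervalIntegrable hmeas hcont).const_add _

noncomputable def stdGaussPDF (t : ℝ) : ℝ := (√(2 * π))⁻¹ * exp (-t ^ 2 / 2)

lemma stdGaussPDF_eq_gaussianPDFReal : stdGaussPDF = gaussianPDFReal 0 1 := by
  ext t
  simp [stdGaussPDF, gaussianPDFReal]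

lemma stdGaussPDF_pos (t : ℝ) : 0 < stdGaussPDF t := by
  unfold stdGaussPDF; positivity

lemma stdGaussPDF_neg (t : ℝ) : stdGaussPDF (-t) = stdGaussPDF t := by
  simp [stdGaussPDF]

lemma continuous_stdGaussPDF : Continuous stdGaussPDF := by
  unfold stdGaussPDF; fun_prop

lemma integrable_stdGaussPDF : Integrable stdGaussPDF :=
  stdGaussPDF_eq_gaussianPDFReal ▸ integrable_gaussianPDFReal 0 1

lemma integral_stdGaussPDF : ∫ t, stdGaussPDF t = 1 :=
  stdGaussPDF_eq_gaussianPDFReal ▸ integral_gaussianPDFReal_eq_one 0 one_ne_zero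

lemma hasDerivAt_stdGaussPDF (t : ℝ) : HasDerivAt stdGaussPDF (-t * stdGaussPDF t) t := by
  have hexponent : HasDerivAt (fun s : ℝ ↦ -s ^ 2 / 2) (-t) t :=
    ((hasDerivAt_pow 2 t).neg.div_const 2).congr_deriv (by ring)
  exact (hexponent.exp.const_mul _).congr_deriv (by simp only [stdGaussPDF]; ring)

lemma integrable_neg_mul_stdGaussPDF : Integrable fun t ↦ -t * stdGaussPDF t := by
  have h := (integrable_mul_exp_neg_mul_sq (one_half_pos (α := ℝ))).const_mul (-(√(2 * π))⁻¹)
  refine h.congr (Eventually.of_forall fun t ↦ ?_)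
  simp only [stdGaussPDF]; ring_nf

lemma stdGaussPDF_sub_le {t x : ℝ} (hx : 0 ≤ x) (ht : t ≤ 0) :
    stdGaussPDF (t - x) ≤ exp (-x ^ 2 / 2) * stdGaussPDF t := by
  simp only [stdGaussPDF]
  rw [mul_left_comm, ← exp_add]
  gcongr
  nlinarith

lemma stdGaussCDF_eq_integral_stdGaussPDF (x : ℝ) :
    stdGaussCDF x = ∫ t in Iic x, stdGaussPDF t := rfl

lemma stdGaussCDF_add_stdGaussCDF_neg (x : ℝ) : stdGaussCDF x + stdGaussCDF (-x) = 1 := by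
  have hneg : stdGaussCDF (-x) = ∫ t in Ioi x, stdGaussPDF t := by
    rw [stdGaussCDF_eq_integral_stdGaussPDF, ← integral_comp_neg_Ioi]
    simp only [stdGaussPDF_neg]
  rw [hneg, stdGaussCDF_eq_integral_stdGaussPDF, intervalIntegral.integral_Iic_add_Ioi
    integrable_stdGaussPDF.integrableOn integrable_stdGaussPDF.integrableOn, integral_stdGaussPDF]

lemma stdGaussCDF_zero : stdGaussCDF 0 = 1 / 2 := by
  have h := stdGaussCDF_add_stdGaussCDF_neg 0
  rw [neg_zero] at h
  linarith

lemma hasDerivAt_stdGaussCDF (x : ℝ) : HasDerivAt stdGaussCDF (stdGaussPDF x) x :=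
  hasDerivAt_integral_Iic integrable_stdGaussPDF
    (continuous_stdGaussPDF.stronglyMeasurableAtFilter _ _) continuous_stdGaussPDF.continuousAt

lemma stdGaussCDF_neg_le_exp_div_two {x : ℝ} (hx : 0 ≤ x) :
    stdGaussCDF (-x) ≤ exp (-x ^ 2 / 2) / 2 := by
  have hshift : stdGaussCDF (-x) = ∫ t in Iic 0, stdGaussPDF (t - x) := by
    simp_rw [sub_eq_add_neg]
    rw [integral_Iic_comp_add_right, zero_add, stdGaussCDF_eq_integral_stdGaussPDF]
  calc stdGaussCDF (-x) ≤ ∫ t in Iic 0, exp (-x ^ 2 / 2) * stdGaussPDF t := by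
        rw [hshift]
        refine setIntegral_mono_on (integrable_stdGaussPDF.comp_sub_right x).integrableOn
          (integrable_stdGaussPDF.const_mul _).integrableOn measurableSet_Iic
          fun t ht ↦ stdGaussPDF_sub_le hx ht
    _ = exp (-x ^ 2 / 2) / 2 := by
        rw [integral_const_mul, ← stdGaussCDF_eq_integral_stdGaussPDF, stdGaussCDF_zero]
        ring

lemma stdGaussCDF_neg_le_stdGaussPDF_div {x : ℝ} (hx : 0 < x) :
    stdGaussCDF (-x) ≤ stdGaussPDF x / x := by
  have hmills : ∫ t in Iic (-x), -t * stdGaussPDF t = stdGaussPDF x := by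
    rw [integral_Iic_of_hasDerivAt_of_tendsto' (fun t _ ↦ hasDerivAt_stdGaussPDF t)
      integrable_neg_mul_stdGaussPDF.integrableOn, sub_zero, stdGaussPDF_neg]
    exact tendsto_zero_of_hasDerivAt_of_integrableOn_Iic (a := 0)
      (fun t _ ↦ hasDerivAt_stdGaussPDF t) integrable_neg_mul_stdGaussPDF.integrableOn
      integrable_stdGaussPDF.integrableOn
  -- `φ ≤ (-t / x) φ` on `(-∞, -x]`, and `-t φ t = φ' t` integrates exactly
  rw [le_div_iff₀ hx, ← hmills, stdGaussCDF_eq_integral_stdGaussPDF, ← integral_mul_const]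
  refine setIntegral_mono_on (integrable_stdGaussPDF.mul_const x).integrableOn
    integrable_neg_mul_stdGaussPDF.integrableOn measurableSet_Iic fun t ht ↦ ?_
  have := stdGaussPDF_pos t
  rw [mem_Iic] at ht
  nlinarith

lemma sqrt_two_mul_pi_lt : √(2 * π) < 2.6 := by
  rw [sqrt_lt' (by norm_num)]
  nlinarith [pi_lt_d2]

lemma exp_mul_stdGaussCDF_neg_le {y : ℝ} (hy : 0 ≤ y) :
    exp y * stdGaussCDF (-y) ≤ (exp y + 1) * stdGaussPDF y := by
  rcases le_total y 1 with hy1 | hy1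
  · have hey : exp y < 2.72 := (exp_le_exp.mpr hy1).trans_lt (exp_one_lt_d9.trans (by norm_num))
    have hcoeff : exp y / 2 ≤ (exp y + 1) * (√(2 * π))⁻¹ := by
      -- `eʸ (√(2π) - 2) < 2.72 · 0.6 < 2`
      rw [← div_eq_mul_inv, div_le_div_iff₀ two_pos (sqrt_pos.mpr (by positivity))]
      nlinarith [sqrt_two_mul_pi_lt, exp_pos y]
    calc exp y * stdGaussCDF (-y) ≤ exp y * (exp (-y ^ 2 / 2) / 2) := by
          gcongr; exact stdGaussCDF_neg_le_exp_div_two hy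
      _ = exp y / 2 * exp (-y ^ 2 / 2) := by ring
      _ ≤ (exp y + 1) * (√(2 * π))⁻¹ * exp (-y ^ 2 / 2) := by gcongr
      _ = (exp y + 1) * stdGaussPDF y := by rw [stdGaussPDF]; ring
  · have hmills := stdGaussCDF_neg_le_stdGaussPDF_div (one_pos.trans_le hy1)
    have hdiv : stdGaussPDF y / y ≤ stdGaussPDF y := div_le_self (stdGaussPDF_pos y).le hy1
    nlinarith [exp_pos y, stdGaussPDF_pos y]

lemma antitoneOn_exp_add_one_mul_stdGaussCDF_neg :
    AntitoneOn (fun y ↦ (exp y + 1) * stdGaussCDF (-y)) (Ici 0) := by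
  have hderiv (y : ℝ) : HasDerivAt (fun y ↦ (exp y + 1) * stdGaussCDF (-y))
      (exp y * stdGaussCDF (-y) - (exp y + 1) * stdGaussPDF y) y := by
    have hneg := (hasDerivAt_stdGaussCDF (-y)).comp y (hasDerivAt_neg y)
    rw [stdGaussPDF_neg] at hneg
    exact (((hasDerivAt_exp y).add_const 1).mul hneg).congr_deriv
      (by simp only [Function.comp_apply]; ring)
  refine antitoneOn_of_hasDerivWithinAt_nonpos (convex_Ici 0)
    (fun y _ ↦ (hderiv y).continuousAt.continuousWithinAt)
    (fun y _ ↦ (hderiv y).hasDerivWithinAt) fun y hy ↦ ?_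
  rw [interior_Ici, mem_Ioi] at hy
  linarith [exp_mul_stdGaussCDF_neg_le hy.le]

/-- for all x ≥ 0, Φ(−x) ≤ e^{−x}·Φ(x). -/
theorem stmt_13 (x : ℝ) (hx : 0 ≤ x) :
    stdGaussCDF (-x) ≤ Real.exp (-x) * stdGaussCDF x := by
  have hmono := antitoneOn_exp_add_one_mul_stdGaussCDF_neg self_mem_Ici (mem_Ici.mpr hx) hx
  simp only [exp_zero, neg_zero, stdGaussCDF_zero] at hmono
  have hsum := stdGaussCDF_add_stdGaussCDF_neg x
  have hkey : exp x * stdGaussCDF (-x) ≤ stdGaussCDF x := by linarith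
  calc stdGaussCDF (-x) = exp (-x) * (exp x * stdGaussCDF (-x)) := by
        rw [← mul_assoc, ← exp_add, neg_add_cancel, exp_zero, one_mul]
    _ ≤ exp (-x) * stdGaussCDF x := by gcongr
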